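/- Let h > 0 and ω > 0 with 0 < ωh < π. Define ϱ : (0, ∞) → ℝ by ϱ(σ) = |ρ(σ, ω, ω)|, i.e., ϱ(σ) = sqrt((σ² + 2ω² − σ² cos(ωh) − 2σω sin(ωh)) / (σ² + 2ω² − σ² cos(ωh) + 2σω sin(ωh))) (both numerator and denominator are positive for σ > 0). Then ϱ is differentiable at σ* = ω√2 / √(1 − cos(ωh)) and its derivative there vanishes: ϱ′(σ*) = 0. -/

import Mathlib

/-!
Write `e^{iωh} = c + i s`. Then `|2ω ± σ s + i σ (1 - c)|² = 2 (σ² (1 - c) + 2ω² ± 2σω s)`, so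
`ϱ(σ)² = N(σ) / D(σ)` with `N, D = q(σ) ∓ ℓσ`, `q(σ) = (1 - c) σ² + 2ω²`, `ℓ = 2ωs`. Being sums of
squares, `N` and `D` are positive, and `N'D - ND' = 2ℓ (σ q' - q) = 4ωs ((1 - c) σ² - 2ω²)`
vanishes at `σ*`, where `(1 - c) σ*² = 2ω²`.
-/

noncomputable def rho (σ : ℝ) (ξ : ℂ) (ω h : ℝ) : ℂ :=
  (2 + Complex.I * ((σ : ℂ) / (ω : ℂ)) * (1 - Complex.exp (-(Complex.I * ξ * (h : ℂ))))) /
  (2 + Complex.I * ((σ : ℂ) / (ω : ℂ)) * (1 - Complex.exp (Complex.I * ξ * (h : ℂ))))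

open Complex in
theorem normSq_two_add_I_mul_div_mul_one_sub_exp (σ ω θ : ℝ) (hω : ω ≠ 0) :
    normSq (2 + I * ((σ : ℂ) / (ω : ℂ)) * (1 - exp (θ * I))) =
      2 * (σ ^ 2 + 2 * ω ^ 2 - σ ^ 2 * Real.cos θ + 2 * σ * ω * Real.sin θ) / ω ^ 2 := by
  have hre : (2 + I * ((σ : ℂ) / (ω : ℂ)) * (1 - exp (θ * I))) =
      ((2 + σ / ω * Real.sin θ : ℝ) : ℂ) + ((σ / ω * (1 - Real.cos θ) : ℝ) : ℂ) * I := by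
    rw [exp_mul_I]
    push_cast
    linear_combination (-(σ / ω) * sin θ) * I_sq
  rw [hre, normSq_add_mul_I]
  field_simp
  linear_combination σ ^ 2 * Real.sin_sq_add_cos_sq θ

theorem norm_rho_eq_sqrt (σ ω h : ℝ) (hω : ω ≠ 0) :
    ‖rho σ (ω : ℂ) ω h‖ =
      Real.sqrt
        ((σ ^ 2 + 2 * ω ^ 2 - σ ^ 2 * Real.cos (ω * h) - 2 * σ * ω * Real.sin (ω * h)) /
         (σ ^ 2 + 2 * ω ^ 2 - σ ^ 2 * Real.cos (ω * h) + 2 * σ * ω * Real.sin (ω * h))) := by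
  have hnum := normSq_two_add_I_mul_div_mul_one_sub_exp σ ω (-(ω * h)) hω
  have hden := normSq_two_add_I_mul_div_mul_one_sub_exp σ ω (ω * h) hω
  rw [Real.cos_neg, Real.sin_neg] at hnum
  rw [rho, show -(Complex.I * ω * h) = ((-(ω * h) : ℝ) : ℂ) * Complex.I by push_cast; ring,
    show Complex.I * ω * h = ((ω * h : ℝ) : ℂ) * Complex.I by push_cast; ring,
    norm_div, Complex.norm_def, Complex.norm_def, ← Real.sqrt_div' _ (Complex.normSq_nonneg _),
    hnum, hden, div_div_div_cancel_right₀ (pow_ne_zero 2 hω), mul_div_mul_left _ _ two_ne_zero]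
  ring_nf

section UnitCircle

variable {c s : ℝ}

theorem quadratic_pos_of_sq_add_sq_eq_one (hcs : s ^ 2 + c ^ 2 = 1) {ω : ℝ} (hω : ω ≠ 0)
    (σ : ℝ) : 0 < σ ^ 2 + 2 * ω ^ 2 - σ ^ 2 * c + 2 * σ * ω * s := by
  have hsum : 2 * (σ ^ 2 + 2 * ω ^ 2 - σ ^ 2 * c + 2 * σ * ω * s) =
      (2 * ω + σ * s) ^ 2 + (σ * (1 - c)) ^ 2 := by
    linear_combination (-σ ^ 2) * hcs
  by_contra! hle
  have hc : σ * (1 - c) = 0 := by nlinarith [sq_nonneg (2 * ω + σ * s)]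
  have hs : 2 * ω + σ * s = 0 := by nlinarith [sq_nonneg (σ * (1 - c))]
  have hσ : σ ≠ 0 := by rintro rfl; exact hω (by linarith)
  have hc1 : c = 1 := by linarith [(mul_eq_zero.1 hc).resolve_left hσ]
  have hs0 : s = 0 := by subst hc1; nlinarith
  exact hω (by subst hs0; linarith)

theorem quadratic_sub_pos_of_sq_add_sq_eq_one (hcs : s ^ 2 + c ^ 2 = 1) {ω : ℝ} (hω : ω ≠ 0)
    (σ : ℝ) : 0 < σ ^ 2 + 2 * ω ^ 2 - σ ^ 2 * c - 2 * σ * ω * s := by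
  have := quadratic_pos_of_sq_add_sq_eq_one (c := c) (s := -s) (by rwa [neg_sq]) hω σ
  linarith

theorem hasDerivAt_div_quadratic (ω x : ℝ)
    (hD : x ^ 2 + 2 * ω ^ 2 - x ^ 2 * c + 2 * x * ω * s ≠ 0) :
    HasDerivAt (fun σ : ℝ => (σ ^ 2 + 2 * ω ^ 2 - σ ^ 2 * c - 2 * σ * ω * s) /
        (σ ^ 2 + 2 * ω ^ 2 - σ ^ 2 * c + 2 * σ * ω * s))
      (4 * ω * (s * (x ^ 2 * (1 - c) - 2 * ω ^ 2)) /
        (x ^ 2 + 2 * ω ^ 2 - x ^ 2 * c + 2 * x * ω * s) ^ 2) x := by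
  have hsq : HasDerivAt (fun σ : ℝ => σ ^ 2) (2 * x) x := by
    simpa using hasDerivAt_pow 2 x
  have hlin : HasDerivAt (fun σ : ℝ => 2 * σ * ω * s) (2 * ω * s) x := by
    simpa using (((hasDerivAt_id x).const_mul 2).mul_const ω).mul_const s
  have hq : HasDerivAt (fun σ : ℝ => σ ^ 2 + 2 * ω ^ 2 - σ ^ 2 * c) (2 * x - 2 * x * c) x :=
    (hsq.add_const _).sub (hsq.mul_const c)
  have hnum : HasDerivAt (fun σ : ℝ => σ ^ 2 + 2 * ω ^ 2 - σ ^ 2 * c - 2 * σ * ω * s)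
      (2 * x - 2 * x * c - 2 * ω * s) x := hq.sub hlin
  have hden : HasDerivAt (fun σ : ℝ => σ ^ 2 + 2 * ω ^ 2 - σ ^ 2 * c + 2 * σ * ω * s)
      (2 * x - 2 * x * c + 2 * ω * s) x := hq.add hlin
  exact (hnum.div hden hD).congr_deriv (by ring)

end UnitCircle

/-- At `cos θ = 1` the junk value `√0 = 0` makes the quotient `0`, but then `sin θ = 0`. -/
theorem sin_mul_sq_div_sqrt_one_sub_cos (θ ω : ℝ) :
    Real.sin θ * ((ω * Real.sqrt 2 / Real.sqrt (1 - Real.cos θ)) ^ 2 * (1 - Real.cos θ)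
      - 2 * ω ^ 2) = 0 := by
  rcases (Real.cos_le_one θ).lt_or_eq with hc | hc
  · have hc0 : 0 < 1 - Real.cos θ := by linarith
    rw [div_pow, mul_pow, Real.sq_sqrt zero_le_two, Real.sq_sqrt hc0.le]
    field_simp
    ring
  · have hs : Real.sin θ = 0 := by nlinarith [Real.sin_sq_add_cos_sq θ]
    rw [hs, zero_mul]

theorem stmt18_general (h ω : ℝ) (hω : 0 < ω) :
    (∀ σ : ℝ, 0 < σ →
      ‖rho σ (ω : ℂ) ω h‖ =
        Real.sqrt
          ((σ ^ 2 + 2 * ω ^ 2 - σ ^ 2 * Real.cos (ω * h) - 2 * σ * ω * Real.sin (ω * h)) /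
           (σ ^ 2 + 2 * ω ^ 2 - σ ^ 2 * Real.cos (ω * h) + 2 * σ * ω * Real.sin (ω * h)))) ∧
    HasDerivAt (fun σ : ℝ =>
        Real.sqrt
          ((σ ^ 2 + 2 * ω ^ 2 - σ ^ 2 * Real.cos (ω * h) - 2 * σ * ω * Real.sin (ω * h)) /
           (σ ^ 2 + 2 * ω ^ 2 - σ ^ 2 * Real.cos (ω * h) + 2 * σ * ω * Real.sin (ω * h))))
      0 (ω * Real.sqrt 2 / Real.sqrt (1 - Real.cos (ω * h))) := by
  refine ⟨fun σ _ => norm_rho_eq_sqrt σ ω h hω.ne', ?_⟩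
  set x := ω * Real.sqrt 2 / Real.sqrt (1 - Real.cos (ω * h))
  have hcs := Real.sin_sq_add_cos_sq (ω * h)
  have hN := quadratic_sub_pos_of_sq_add_sq_eq_one hcs hω.ne' x
  have hD := quadratic_pos_of_sq_add_sq_eq_one hcs hω.ne' x
  have hratio := hasDerivAt_div_quadratic ω x hD.ne'
  rw [sin_mul_sq_div_sqrt_one_sub_cos, mul_zero, zero_div] at hratio
  simpa using hratio.sqrt (div_pos hN hD).ne'

/-- the amplitude `ϱ(σ) = |ρ(σ, ω, ω)|` of the attenuation factor, which
equals the explicit square-root expression below, is differentiable at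
`σ* = ω√2/√(1 − cos(ωh))` with vanishing derivative there. -/
theorem stmt18 (h ω : ℝ) (hh : 0 < h) (hω : 0 < ω) (hωh : ω * h < Real.pi) :
    (∀ σ : ℝ, 0 < σ →
      ‖rho σ (ω : ℂ) ω h‖ =
        Real.sqrt
          ((σ ^ 2 + 2 * ω ^ 2 - σ ^ 2 * Real.cos (ω * h) - 2 * σ * ω * Real.sin (ω * h)) /
           (σ ^ 2 + 2 * ω ^ 2 - σ ^ 2 * Real.cos (ω * h) + 2 * σ * ω * Real.sin (ω * h)))) ∧
    HasDerivAt (fun σ : ℝ =>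
        Real.sqrt
          ((σ ^ 2 + 2 * ω ^ 2 - σ ^ 2 * Real.cos (ω * h) - 2 * σ * ω * Real.sin (ω * h)) /
           (σ ^ 2 + 2 * ω ^ 2 - σ ^ 2 * Real.cos (ω * h) + 2 * σ * ω * Real.sin (ω * h))))
      0 (ω * Real.sqrt 2 / Real.sqrt (1 - Real.cos (ω * h))) :=
  stmt18_general h ω hω
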